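/- Let E^α(t) = (1/2)∫_ℝ ((∂^α z)_t² + (∂^α z)_x² + (∂^α z)² G_b) dx with G_b = 1/cosh²(2x), for multi-indices α = (m,n) in (t,x). Suppose z is smooth of locally x-compact support satisfying z_tt − z_xx + zG = g, with ‖∂^β G‖ ≤ C/cosh(2x) for all |β| ≤ m+n and ∫(∂_t^m ∂_x^{n−1} g)² dx ≤ C' for all t ≥ 0. Then for n ≥ 1, √(E^{(m,n)})(t) ≤ C''(√(E^{(m+1,n−1)})(t) + Σ_{β ≤ (m,n−1)} √(E^β)(t) + √(C')) for all t ≥ 0, where C'' depends only on C, m, n. -/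

import Mathlib

open Real MeasureTheory

noncomputable def pt (u : ℝ → ℝ → ℝ) : ℝ → ℝ → ℝ := fun t x => deriv (fun s => u s x) t
noncomputable def px (u : ℝ → ℝ → ℝ) : ℝ → ℝ → ℝ := fun t x => deriv (fun y => u t y) x

/-- iterated partial derivative ∂_t^m ∂_x^n -/
noncomputable def pd (m n : ℕ) (u : ℝ → ℝ → ℝ) : ℝ → ℝ → ℝ := pt^[m] (px^[n] u)

/-- locally x-compact support -/
def LocXCompact (u : ℝ → ℝ → ℝ) : Prop :=
  ∀ T₁ T₂ : ℝ, ∃ K : Set ℝ, IsCompact K ∧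
    ∀ t x, t ∈ Set.Icc T₁ T₂ → x ∉ K → u t x = 0

/-- abbreviation for smoothness of the uncurried function -/
def CD (u : ℝ → ℝ → ℝ) : Prop := ContDiff ℝ (⊤ : ℕ∞) (fun p : ℝ × ℝ => u p.1 p.2)

lemma hasDerivAt_line_t (u : ℝ → ℝ → ℝ) (hu : CD u) (t x : ℝ) :
    HasDerivAt (fun s => u s x) (fderiv ℝ (fun p : ℝ × ℝ => u p.1 p.2) (t, x) (1, 0)) t := by
  have h1 : HasDerivAt (fun s : ℝ => (s, x)) ((1 : ℝ), (0 : ℝ)) t := by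
    simpa using ((hasDerivAt_id t).prodMk (hasDerivAt_const t x))
  have h2 := (hu.differentiable (by simp) (t, x)).hasFDerivAt
  exact h2.comp_hasDerivAt t h1

lemma hasDerivAt_line_x (u : ℝ → ℝ → ℝ) (hu : CD u) (t x : ℝ) :
    HasDerivAt (fun y => u t y) (fderiv ℝ (fun p : ℝ × ℝ => u p.1 p.2) (t, x) (0, 1)) x := by
  have h1 : HasDerivAt (fun y : ℝ => (t, y)) ((0 : ℝ), (1 : ℝ)) x := by
    simpa using ((hasDerivAt_const x t).prodMk (hasDerivAt_id x))
  have h2 := (hu.differentiable (by simp) (t, x)).hasFDerivAt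
  exact h2.comp_hasDerivAt x h1

lemma pt_eq (u : ℝ → ℝ → ℝ) (hu : CD u) (t x : ℝ) :
    pt u t x = fderiv ℝ (fun p : ℝ × ℝ => u p.1 p.2) (t, x) (1, 0) :=
  (hasDerivAt_line_t u hu t x).deriv

lemma px_eq (u : ℝ → ℝ → ℝ) (hu : CD u) (t x : ℝ) :
    px u t x = fderiv ℝ (fun p : ℝ × ℝ => u p.1 p.2) (t, x) (0, 1) :=
  (hasDerivAt_line_x u hu t x).deriv

lemma CD_pt {u : ℝ → ℝ → ℝ} (hu : CD u) : CD (pt u) := by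
  have h : ContDiff ℝ (⊤ : ℕ∞) (fun p : ℝ × ℝ => fderiv ℝ (fun q : ℝ × ℝ => u q.1 q.2) p (1, 0)) :=
    (hu.fderiv_right (by simp)).clm_apply contDiff_const
  have : (fun p : ℝ × ℝ => pt u p.1 p.2) = fun p : ℝ × ℝ =>
      fderiv ℝ (fun q : ℝ × ℝ => u q.1 q.2) p (1, 0) := by
    funext p; exact pt_eq u hu p.1 p.2
  unfold CD
  rw [this]; exact h

lemma CD_px {u : ℝ → ℝ → ℝ} (hu : CD u) : CD (px u) := by
  have h : ContDiff ℝ (⊤ : ℕ∞) (fun p : ℝ × ℝ => fderiv ℝ (fun q : ℝ × ℝ => u q.1 q.2) p (0, 1)) :=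
    (hu.fderiv_right (by simp)).clm_apply contDiff_const
  have : (fun p : ℝ × ℝ => px u p.1 p.2) = fun p : ℝ × ℝ =>
      fderiv ℝ (fun q : ℝ × ℝ => u q.1 q.2) p (0, 1) := by
    funext p; exact px_eq u hu p.1 p.2
  unfold CD
  rw [this]; exact h

lemma schwarz {u : ℝ → ℝ → ℝ} (hu : CD u) (t x : ℝ) : pt (px u) t x = px (pt u) t x := by
  set U : ℝ × ℝ → ℝ := fun p => u p.1 p.2 with hU
  set A : ℝ × ℝ → (ℝ × ℝ →L[ℝ] ℝ) := fderiv ℝ U with hA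
  have hAc : ContDiff ℝ (⊤ : ℕ∞) A := hu.fderiv_right (by simp)
  have hAd := (hAc.differentiable (by simp) (t, x)).hasFDerivAt
  set f'' : ℝ × ℝ →L[ℝ] (ℝ × ℝ →L[ℝ] ℝ) := fderiv ℝ A (t, x) with hf''
  have hsym : ∀ v w, f'' v w = f'' w v :=
    second_derivative_symmetric (fun y => (hu.differentiable (by simp) y).hasFDerivAt) hAd
  -- derivative of s ↦ A (s, x) v
  have lineT : ∀ v : ℝ × ℝ, HasDerivAt (fun s => A (s, x) v) (f'' (1, 0) v) t := by
    intro v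
    have h1 : HasDerivAt (fun s : ℝ => (s, x)) ((1 : ℝ), (0 : ℝ)) t := by
      simpa using ((hasDerivAt_id t).prodMk (hasDerivAt_const t x))
    have h2 : HasDerivAt (fun s => A (s, x)) (f'' (1, 0)) t := hAd.comp_hasDerivAt t h1
    simpa using h2.clm_apply (hasDerivAt_const t v)
  have lineX : ∀ v : ℝ × ℝ, HasDerivAt (fun y => A (t, y) v) (f'' (0, 1) v) x := by
    intro v
    have h1 : HasDerivAt (fun y : ℝ => (t, y)) ((0 : ℝ), (1 : ℝ)) x := by
      simpa using ((hasDerivAt_const x t).prodMk (hasDerivAt_id x))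
    have h2 : HasDerivAt (fun y => A (t, y)) (f'' (0, 1)) x := hAd.comp_hasDerivAt x h1
    simpa using h2.clm_apply (hasDerivAt_const x v)
  have e1 : pt (px u) t x = f'' (1, 0) (0, 1) := by
    have : (fun s => px u s x) = fun s => A (s, x) (0, 1) := by
      funext s; exact px_eq u hu s x
    show deriv (fun s => px u s x) t = _
    rw [this]; exact (lineT (0, 1)).deriv
  have e2 : px (pt u) t x = f'' (0, 1) (1, 0) := by
    have : (fun y => pt u t y) = fun y => A (t, y) (1, 0) := by
      funext y; exact pt_eq u hu t y
    show deriv (fun y => pt u t y) x = _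
    rw [this]; exact (lineX (1, 0)).deriv
  rw [e1, e2, hsym]

lemma CD_ptIter {u : ℝ → ℝ → ℝ} (hu : CD u) (k : ℕ) : CD (pt^[k] u) := by
  induction k with
  | zero => simpa using hu
  | succ k ih => rw [Function.iterate_succ_apply']; exact CD_pt ih

lemma CD_pxIter {u : ℝ → ℝ → ℝ} (hu : CD u) (k : ℕ) : CD (px^[k] u) := by
  induction k with
  | zero => simpa using hu
  | succ k ih => rw [Function.iterate_succ_apply']; exact CD_px ih

lemma CD_pd {u : ℝ → ℝ → ℝ} (hu : CD u) (i j : ℕ) : CD (pd i j u) :=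
  CD_ptIter (CD_pxIter hu j) i

lemma px_ptIter {u : ℝ → ℝ → ℝ} (hu : CD u) (k : ℕ) : px (pt^[k] u) = pt^[k] (px u) := by
  induction k with
  | zero => simp
  | succ k ih =>
    rw [Function.iterate_succ_apply', Function.iterate_succ_apply']
    have h1 : px (pt (pt^[k] u)) = pt (px (pt^[k] u)) := by
      funext t x; exact (schwarz (CD_ptIter hu k) t x).symm
    rw [h1, ih]

lemma pt_pxIter {u : ℝ → ℝ → ℝ} (hu : CD u) (k : ℕ) : pt (px^[k] u) = px^[k] (pt u) := by
  induction k with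
  | zero => simp
  | succ k ih =>
    rw [Function.iterate_succ_apply', Function.iterate_succ_apply']
    have h1 : pt (px (px^[k] u)) = px (pt (px^[k] u)) := by
      funext t x; exact schwarz (CD_pxIter hu k) t x
    rw [h1, ih]

lemma pd_succ_t (m n : ℕ) (u : ℝ → ℝ → ℝ) : pd (m + 1) n u = pt (pd m n u) := by
  unfold pd; rw [Function.iterate_succ_apply']

lemma pd_px (m n : ℕ) (u : ℝ → ℝ → ℝ) : pd m n (px u) = pd m (n + 1) u := by
  unfold pd; rw [Function.iterate_succ_apply]

lemma pd_pt {u : ℝ → ℝ → ℝ} (hu : CD u) (m n : ℕ) : pd m n (pt u) = pd (m + 1) n u := by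
  unfold pd
  rw [← pt_pxIter hu n, ← Function.iterate_succ_apply pt m]

lemma pd_succ_x {u : ℝ → ℝ → ℝ} (hu : CD u) (m n : ℕ) : pd m (n + 1) u = px (pd m n u) := by
  unfold pd
  rw [Function.iterate_succ_apply' px n, px_ptIter (CD_pxIter hu n) m]

lemma CD_add {u v : ℝ → ℝ → ℝ} (hu : CD u) (hv : CD v) : CD (fun t x => u t x + v t x) := hu.add hv
lemma CD_sub {u v : ℝ → ℝ → ℝ} (hu : CD u) (hv : CD v) : CD (fun t x => u t x - v t x) := hu.sub hv
lemma CD_mul {u v : ℝ → ℝ → ℝ} (hu : CD u) (hv : CD v) : CD (fun t x => u t x * v t x) := hu.mul hv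
lemma CD_smul (c : ℝ) {u : ℝ → ℝ → ℝ} (hu : CD u) : CD (fun t x => c * u t x) := contDiff_const.mul hu

lemma pt_add {u v : ℝ → ℝ → ℝ} (hu : CD u) (hv : CD v) :
    pt (fun t x => u t x + v t x) = fun t x => pt u t x + pt v t x := by
  funext t x
  rw [pt_eq u hu t x, pt_eq v hv t x]
  exact ((hasDerivAt_line_t u hu t x).add (hasDerivAt_line_t v hv t x)).deriv

lemma px_add {u v : ℝ → ℝ → ℝ} (hu : CD u) (hv : CD v) :
    px (fun t x => u t x + v t x) = fun t x => px u t x + px v t x := by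
  funext t x
  rw [px_eq u hu t x, px_eq v hv t x]
  exact ((hasDerivAt_line_x u hu t x).add (hasDerivAt_line_x v hv t x)).deriv

lemma pt_sub {u v : ℝ → ℝ → ℝ} (hu : CD u) (hv : CD v) :
    pt (fun t x => u t x - v t x) = fun t x => pt u t x - pt v t x := by
  funext t x
  rw [pt_eq u hu t x, pt_eq v hv t x]
  exact ((hasDerivAt_line_t u hu t x).sub (hasDerivAt_line_t v hv t x)).deriv

lemma px_sub {u v : ℝ → ℝ → ℝ} (hu : CD u) (hv : CD v) :
    px (fun t x => u t x - v t x) = fun t x => px u t x - px v t x := by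
  funext t x
  rw [px_eq u hu t x, px_eq v hv t x]
  exact ((hasDerivAt_line_x u hu t x).sub (hasDerivAt_line_x v hv t x)).deriv

lemma pt_smul (c : ℝ) {u : ℝ → ℝ → ℝ} (hu : CD u) :
    pt (fun t x => c * u t x) = fun t x => c * pt u t x := by
  funext t x
  rw [pt_eq u hu t x]
  exact ((hasDerivAt_line_t u hu t x).const_mul c).deriv

lemma px_smul (c : ℝ) {u : ℝ → ℝ → ℝ} (hu : CD u) :
    px (fun t x => c * u t x) = fun t x => c * px u t x := by
  funext t x
  rw [px_eq u hu t x]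
  exact ((hasDerivAt_line_x u hu t x).const_mul c).deriv

lemma pt_mul {u v : ℝ → ℝ → ℝ} (hu : CD u) (hv : CD v) :
    pt (fun t x => u t x * v t x) = fun t x => pt u t x * v t x + u t x * pt v t x := by
  funext t x
  rw [pt_eq u hu t x, pt_eq v hv t x]
  exact ((hasDerivAt_line_t u hu t x).mul (hasDerivAt_line_t v hv t x)).deriv

lemma px_mul {u v : ℝ → ℝ → ℝ} (hu : CD u) (hv : CD v) :
    px (fun t x => u t x * v t x) = fun t x => px u t x * v t x + u t x * px v t x := by
  funext t x
  rw [px_eq u hu t x, px_eq v hv t x]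
  exact ((hasDerivAt_line_x u hu t x).mul (hasDerivAt_line_x v hv t x)).deriv

lemma binom_recur (n : ℕ) (f : ℕ → ℝ) :
    ∑ j ∈ Finset.range (n+2), ((n+1).choose j : ℝ) * f j
    = (∑ j ∈ Finset.range (n+1), (n.choose j : ℝ) * f (j+1))
      + ∑ j ∈ Finset.range (n+1), (n.choose j : ℝ) * f j := by
  rw [Finset.sum_range_succ' (fun j => (((n+1).choose j : ℕ) : ℝ) * f j) (n+1),
      Finset.sum_range_succ' (fun j => ((n.choose j : ℕ) : ℝ) * f j) n]
  have h1 : ∀ j, (((n+1).choose (j+1) : ℕ) : ℝ) = (n.choose j : ℝ) + (n.choose (j+1) : ℝ) := by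
    intro j; rw [Nat.choose_succ_succ]; push_cast; ring
  have h2 : ∑ j ∈ Finset.range (n+1), (((n+1).choose (j+1) : ℕ) : ℝ) * f (j+1)
      = (∑ j ∈ Finset.range (n+1), (n.choose j : ℝ) * f (j+1))
        + ∑ j ∈ Finset.range (n+1), (n.choose (j+1) : ℝ) * f (j+1) := by
    rw [← Finset.sum_add_distrib]
    refine Finset.sum_congr rfl fun j _ => ?_
    rw [h1]; ring
  have h3 : ∑ j ∈ Finset.range (n+1), (n.choose (j+1) : ℝ) * f (j+1)
      = ∑ j ∈ Finset.range n, (n.choose (j+1) : ℝ) * f (j+1) := by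
    rw [Finset.sum_range_succ]
    simp [Nat.choose_succ_self]
  rw [h2, h3]
  simp [Nat.choose_zero_right]
  ring

section Op
variable (D : (ℝ → ℝ → ℝ) → (ℝ → ℝ → ℝ))
variable (hCD : ∀ {u : ℝ → ℝ → ℝ}, CD u → CD (D u))
variable (hadd : ∀ {u v : ℝ → ℝ → ℝ}, CD u → CD v →
  D (fun t x => u t x + v t x) = fun t x => D u t x + D v t x)
variable (hmul : ∀ {u v : ℝ → ℝ → ℝ}, CD u → CD v →
  D (fun t x => u t x * v t x) = fun t x => D u t x * v t x + u t x * D v t x)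

include hCD in
lemma op_iter_CD {u : ℝ → ℝ → ℝ} (hu : CD u) (k : ℕ) : CD (D^[k] u) := by
  induction k with
  | zero => simpa using hu
  | succ k ih => rw [Function.iterate_succ_apply']; exact hCD ih

include hCD hadd in
lemma op_iter_add (k : ℕ) : ∀ {u v : ℝ → ℝ → ℝ}, CD u → CD v →
    D^[k] (fun t x => u t x + v t x) = fun t x => D^[k] u t x + D^[k] v t x := by
  induction k with
  | zero => intro u v _ _; simp
  | succ k ih =>
    intro u v hu hv
    rw [Function.iterate_succ_apply, Function.iterate_succ_apply, Function.iterate_succ_apply,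
        hadd hu hv, ih (hCD hu) (hCD hv)]

include hCD hadd hmul in
lemma op_iter_mul (k : ℕ) : ∀ {u v : ℝ → ℝ → ℝ}, CD u → CD v →
    D^[k] (fun t x => u t x * v t x)
      = fun t x => ∑ j ∈ Finset.range (k+1),
          (k.choose j : ℝ) * (D^[j] u t x * D^[k-j] v t x) := by
  induction k with
  | zero => intro u v _ _; simp
  | succ k ih =>
    intro u v hu hv
    rw [Function.iterate_succ_apply, hmul hu hv,
        op_iter_add D hCD hadd k (CD_mul (hCD hu) hv) (CD_mul hu (hCD hv)),
        ih (hCD hu) hv, ih hu (hCD hv)]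
    funext t x
    have hb := binom_recur k (fun j => D^[j] u t x * D^[k+1-j] v t x)
    simp only [] at hb ⊢
    rw [hb]
    congr 1
    · refine Finset.sum_congr rfl fun j hj => ?_
      rw [Function.iterate_succ_apply]
      simp [Nat.succ_sub_succ]
    · refine Finset.sum_congr rfl fun j hj => ?_
      have hj' : j ≤ k := Nat.lt_succ_iff.mp (Finset.mem_range.mp hj)
      have h4 : k - j + 1 = k + 1 - j := by omega
      rw [← Function.iterate_succ_apply D (k - j)]
      norm_num [Nat.succ_eq_add_one, h4]

variable (hzero : D (fun _ _ => (0:ℝ)) = fun _ _ => 0)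
variable (hsmul : ∀ (c : ℝ) {u : ℝ → ℝ → ℝ}, CD u →
  D (fun t x => c * u t x) = fun t x => c * D u t x)

include hzero in
lemma op_iter_zero (k : ℕ) : D^[k] (fun _ _ => (0:ℝ)) = fun _ _ => 0 := by
  induction k with
  | zero => rfl
  | succ k ih => rw [Function.iterate_succ_apply, hzero, ih]

include hCD hsmul in
lemma op_iter_smul (k : ℕ) (c : ℝ) : ∀ {u : ℝ → ℝ → ℝ}, CD u →
    D^[k] (fun t x => c * u t x) = fun t x => c * D^[k] u t x := by
  induction k with
  | zero => intro u hu; rfl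
  | succ k ih =>
    intro u hu
    rw [Function.iterate_succ_apply, Function.iterate_succ_apply, hsmul c hu]
    exact ih (hCD hu)

lemma CD_sum (r : ℕ) (F : ℕ → ℝ → ℝ → ℝ) (hF : ∀ j, CD (F j)) :
    CD (fun t x => ∑ j ∈ Finset.range r, F j t x) :=
  ContDiff.sum (fun j _ => hF j)

include hCD hadd hzero in
lemma op_iter_sum (k : ℕ) (r : ℕ) (F : ℕ → ℝ → ℝ → ℝ) (hF : ∀ j, CD (F j)) :
    D^[k] (fun t x => ∑ j ∈ Finset.range r, F j t x)
      = fun t x => ∑ j ∈ Finset.range r, D^[k] (F j) t x := by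
  induction r with
  | zero => simpa using op_iter_zero D hzero k
  | succ r ih =>
    have h1 : (fun t x => ∑ j ∈ Finset.range (r+1), F j t x)
        = fun t x => (∑ j ∈ Finset.range r, F j t x) + F r t x := by
      funext t x; rw [Finset.sum_range_succ]
    rw [h1, op_iter_add D hCD hadd k (CD_sum r F hF) (hF r), ih]
    funext t x; rw [Finset.sum_range_succ]
  end Op

lemma pt_zero : pt (fun _ _ => (0:ℝ)) = fun _ _ => 0 := by
  funext t x; simp [pt]

lemma px_zero : px (fun _ _ => (0:ℝ)) = fun _ _ => 0 := by
  funext t x; simp [px]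

lemma pd_add (m n : ℕ) {u v : ℝ → ℝ → ℝ} (hu : CD u) (hv : CD v) :
    pd m n (fun t x => u t x + v t x) = fun t x => pd m n u t x + pd m n v t x := by
  unfold pd
  rw [op_iter_add px (fun h => CD_px h) (fun h1 h2 => px_add h1 h2) n hu hv,
      op_iter_add pt (fun h => CD_pt h) (fun h1 h2 => pt_add h1 h2) m
        (CD_pxIter hu n) (CD_pxIter hv n)]

lemma pd_smul (m n : ℕ) (c : ℝ) {u : ℝ → ℝ → ℝ} (hu : CD u) :
    pd m n (fun t x => c * u t x) = fun t x => c * pd m n u t x := by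
  unfold pd
  rw [op_iter_smul px (fun h => CD_px h) (fun c {u} h => px_smul c h) n c hu,
      op_iter_smul pt (fun h => CD_pt h) (fun c {u} h => pt_smul c h) m c (CD_pxIter hu n)]

lemma pd_sub (m n : ℕ) {u v : ℝ → ℝ → ℝ} (hu : CD u) (hv : CD v) :
    pd m n (fun t x => u t x - v t x) = fun t x => pd m n u t x - pd m n v t x := by
  have h1 : (fun t x => u t x - v t x) = fun t x => u t x + (-1) * v t x := by
    funext t x; ring
  rw [h1, pd_add m n hu (CD_smul (-1) hv), pd_smul m n (-1) hv]
  funext t x; ring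

lemma pd_mul (m n : ℕ) {u v : ℝ → ℝ → ℝ} (hu : CD u) (hv : CD v) (t x : ℝ) :
    pd m n (fun t x => u t x * v t x) t x
      = ∑ p ∈ Finset.range (m+1) ×ˢ Finset.range (n+1),
          ((m.choose p.1 : ℝ) * (n.choose p.2 : ℝ))
            * (pd p.1 p.2 u t x * pd (m - p.1) (n - p.2) v t x) := by
  unfold pd
  rw [op_iter_mul px (fun h => CD_px h) (fun h1 h2 => px_add h1 h2)
      (fun h1 h2 => px_mul h1 h2) n hu hv]
  rw [op_iter_sum pt (fun h => CD_pt h) (fun h1 h2 => pt_add h1 h2) pt_zero m (n+1)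
      (fun j => fun t x => (n.choose j : ℝ) * (px^[j] u t x * px^[n-j] v t x))
      (fun j => CD_smul _ (CD_mul (CD_pxIter hu j) (CD_pxIter hv (n-j))))]
  rw [Finset.sum_product]
  rw [Finset.sum_comm]
  refine Finset.sum_congr rfl fun j hj => ?_
  rw [op_iter_smul pt (fun h => CD_pt h) (fun c {u} h => pt_smul c h) m _
      (CD_mul (CD_pxIter hu j) (CD_pxIter hv (n-j)))]
  simp only []
  rw [op_iter_mul pt (fun h => CD_pt h) (fun h1 h2 => pt_add h1 h2)
      (fun h1 h2 => pt_mul h1 h2) m (CD_pxIter hu j) (CD_pxIter hv (n-j))]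
  rw [Finset.mul_sum]
  refine Finset.sum_congr rfl fun i hi => ?_
  ring

lemma cont_slice_t {u : ℝ → ℝ → ℝ} (hu : CD u) (x : ℝ) : Continuous (fun s => u s x) :=
  hu.continuous.comp (continuous_id.prodMk continuous_const)

lemma cont_slice_x {u : ℝ → ℝ → ℝ} (hu : CD u) (t : ℝ) : Continuous (fun y => u t y) :=
  hu.continuous.comp (continuous_const.prodMk continuous_id)

lemma lxc_px {u : ℝ → ℝ → ℝ} (hu : LocXCompact u) : LocXCompact (px u) := by
  intro T₁ T₂
  obtain ⟨K, hK, hK0⟩ := hu T₁ T₂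
  refine ⟨K, hK, fun t x ht hx => ?_⟩
  have hopen : IsOpen Kᶜ := hK.isClosed.isOpen_compl
  have hev : (fun y => u t y) =ᶠ[nhds x] (fun _ => 0) := by
    filter_upwards [hopen.mem_nhds hx] with y hy
    exact hK0 t y ht hy
  show deriv (fun y => u t y) x = 0
  rw [hev.deriv_eq, deriv_const]

lemma lxc_pt {u : ℝ → ℝ → ℝ} (hu : LocXCompact u) : LocXCompact (pt u) := by
  intro T₁ T₂
  obtain ⟨K, hK, hK0⟩ := hu (T₁ - 1) (T₂ + 1)
  refine ⟨K, hK, fun t x ht hx => ?_⟩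
  have hev : (fun s => u s x) =ᶠ[nhds t] (fun _ => 0) := by
    have hmem : Set.Ioo (T₁ - 1) (T₂ + 1) ∈ nhds t :=
      (isOpen_Ioo).mem_nhds ⟨by linarith [ht.1], by linarith [ht.2]⟩
    filter_upwards [hmem] with s hs
    exact hK0 s x ⟨hs.1.le, hs.2.le⟩ hx
  show deriv (fun s => u s x) t = 0
  rw [hev.deriv_eq, deriv_const]

lemma lxc_pd {u : ℝ → ℝ → ℝ} (hu : LocXCompact u) (i j : ℕ) : LocXCompact (pd i j u) := by
  unfold pd
  have h1 : LocXCompact (px^[j] u) := by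
    induction j with
    | zero => exact hu
    | succ j ih => rw [Function.iterate_succ_apply']; exact lxc_px ih
  induction i with
  | zero => exact h1
  | succ i ih => rw [Function.iterate_succ_apply']; exact lxc_pt ih

lemma lxc_compactSupport {u : ℝ → ℝ → ℝ} (hu : LocXCompact u) (t : ℝ) :
    HasCompactSupport (fun x => u t x) := by
  obtain ⟨K, hK, hK0⟩ := hu t t
  exact HasCompactSupport.intro hK (fun x hx => hK0 t x (by simp) hx)

lemma vanish_px {h : ℝ → ℝ → ℝ} (h0 : ∀ t x, 0 ≤ t → h t x = 0) :
    ∀ t x, 0 ≤ t → px h t x = 0 := by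
  intro t x ht
  have : (fun y => h t y) = fun _ => 0 := by funext y; exact h0 t y ht
  show deriv (fun y => h t y) x = 0
  rw [this, deriv_const]

lemma vanish_pt {h : ℝ → ℝ → ℝ} (hh : CD h) (h0 : ∀ t x, 0 ≤ t → h t x = 0) :
    ∀ t x, 0 ≤ t → pt h t x = 0 := by
  have hpos : ∀ t x, 0 < t → pt h t x = 0 := by
    intro t x ht
    have hev : (fun s => h s x) =ᶠ[nhds t] (fun _ => 0) := by
      filter_upwards [(isOpen_Ioi (a := (0:ℝ))).mem_nhds ht] with s hs
      exact h0 s x (le_of_lt hs)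
    show deriv (fun s => h s x) t = 0
    rw [hev.deriv_eq, deriv_const]
  intro t x ht
  rcases lt_or_eq_of_le ht with ht' | ht'
  · exact hpos t x ht'
  · subst ht'
    have hcont : Continuous (fun s => pt h s x) := cont_slice_t (CD_pt hh) x
    have h1 : Filter.Tendsto (fun k : ℕ => (1:ℝ)/(k+1)) Filter.atTop (nhds 0) :=
      tendsto_one_div_add_atTop_nhds_zero_nat
    have h2 : Filter.Tendsto (fun k : ℕ => pt h ((1:ℝ)/(k+1)) x) Filter.atTop
        (nhds (pt h 0 x)) := (hcont.tendsto 0).comp h1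
    have h3 : (fun k : ℕ => pt h ((1:ℝ)/(k+1)) x) = fun _ => 0 := by
      funext k
      exact hpos _ x (by positivity)
    rw [h3] at h2
    exact (tendsto_nhds_unique tendsto_const_nhds h2).symm

lemma vanish_pd {h : ℝ → ℝ → ℝ} (hh : CD h) (h0 : ∀ t x, 0 ≤ t → h t x = 0) (i j : ℕ) :
    ∀ t x, 0 ≤ t → pd i j h t x = 0 := by
  unfold pd
  have hx : ∀ t x, 0 ≤ t → px^[j] h t x = 0 := by
    induction j with
    | zero => exact h0
    | succ j ih =>
      rw [Function.iterate_succ_apply']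
      exact vanish_px ih
  induction i with
  | zero => exact hx
  | succ i ih =>
    rw [Function.iterate_succ_apply']
    exact vanish_pt (CD_ptIter (CD_pxIter hh j) i) ih

lemma choose_le_two_pow' (m i : ℕ) : m.choose i ≤ 2^m := by
  rcases le_or_gt i m with h | h
  · calc m.choose i ≤ ∑ j ∈ Finset.range (m+1), m.choose j :=
          Finset.single_le_sum (fun _ _ => Nat.zero_le _)
            (Finset.mem_range.mpr (Nat.lt_succ_of_le h))
    _ = 2^m := Nat.sum_range_choose m
  · simp [Nat.choose_eq_zero_of_lt h]

lemma sqrt_add_le' {a b : ℝ} (ha : 0 ≤ a) (hb : 0 ≤ b) :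
    Real.sqrt (a + b) ≤ Real.sqrt a + Real.sqrt b := by
  have h : a + b ≤ (Real.sqrt a + Real.sqrt b)^2 := by
    nlinarith [Real.sq_sqrt ha, Real.sq_sqrt hb, Real.sqrt_nonneg a, Real.sqrt_nonneg b]
  calc Real.sqrt (a + b) ≤ Real.sqrt ((Real.sqrt a + Real.sqrt b)^2) := Real.sqrt_le_sqrt h
  _ = Real.sqrt a + Real.sqrt b := Real.sqrt_sq (by positivity)

lemma sqrt_sum_le {ι : Type*} (S : Finset ι) (f : ι → ℝ) (hf : ∀ p ∈ S, 0 ≤ f p) :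
    Real.sqrt (∑ p ∈ S, f p) ≤ ∑ p ∈ S, Real.sqrt (f p) := by
  have h : ∑ p ∈ S, f p ≤ (∑ p ∈ S, Real.sqrt (f p))^2 := by
    have h1 : ∑ p ∈ S, f p = ∑ p ∈ S, (Real.sqrt (f p))^2 :=
      Finset.sum_congr rfl fun p hp => (Real.sq_sqrt (hf p hp)).symm
    rw [h1]
    exact Finset.sum_sq_le_sq_sum_of_nonneg (fun p _ => Real.sqrt_nonneg _)
  calc Real.sqrt (∑ p ∈ S, f p) ≤ Real.sqrt ((∑ p ∈ S, Real.sqrt (f p))^2) :=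
        Real.sqrt_le_sqrt h
  _ = ∑ p ∈ S, Real.sqrt (f p) :=
        Real.sqrt_sq (Finset.sum_nonneg fun p _ => Real.sqrt_nonneg _)

lemma pde_key {z G g : ℝ → ℝ → ℝ} (hz : CD z) (hG : CD G) (hg : CD g)
    (hpde : ∀ t x, 0 ≤ t → pt (pt z) t x - px (px z) t x + z t x * G t x = g t x)
    (m n' : ℕ) : ∀ t x, 0 ≤ t →
    px (pd m (n'+1) z) t x
      = pt (pd (m+1) n' z) t x + pd m n' (fun a b => z a b * G a b) t x - pd m n' g t x := by
  intro t x ht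
  have hzG : CD (fun a b => z a b * G a b) := CD_mul hz hG
  have hF1 : CD (pt (pt z)) := CD_pt (CD_pt hz)
  have hF2 : CD (px (px z)) := CD_px (CD_px hz)
  have hU2 : CD (fun a b => pt (pt z) a b - px (px z) a b) := CD_sub hF1 hF2
  have hU3 : CD (fun a b => (pt (pt z) a b - px (px z) a b) + z a b * G a b) :=
    CD_add hU2 hzG
  have hhCD : CD (fun a b => ((pt (pt z) a b - px (px z) a b) + z a b * G a b) - g a b) :=
    CD_sub hU3 hg
  have h0 : ∀ a b, 0 ≤ a →
      ((pt (pt z) a b - px (px z) a b) + z a b * G a b) - g a b = 0 := by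
    intro a b hab
    have := hpde a b hab
    linarith
  have hv := vanish_pd hhCD h0 m n' t x ht
  have e1 : pd m n' (fun a b => ((pt (pt z) a b - px (px z) a b) + z a b * G a b) - g a b) t x
      = pd m n' (fun a b => (pt (pt z) a b - px (px z) a b) + z a b * G a b) t x
        - pd m n' g t x :=
    congrFun (congrFun (pd_sub m n' hU3 hg) t) x
  have e2 : pd m n' (fun a b => (pt (pt z) a b - px (px z) a b) + z a b * G a b) t x
      = pd m n' (fun a b => pt (pt z) a b - px (px z) a b) t x
        + pd m n' (fun a b => z a b * G a b) t x :=
    congrFun (congrFun (pd_add m n' hU2 hzG) t) x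
  have e3 : pd m n' (fun a b => pt (pt z) a b - px (px z) a b) t x
      = pd m n' (pt (pt z)) t x - pd m n' (px (px z)) t x :=
    congrFun (congrFun (pd_sub m n' hF1 hF2) t) x
  have e4 : pd m n' (pt (pt z)) = pt (pd (m+1) n' z) := by
    calc pd m n' (pt (pt z)) = pd (m+1) n' (pt z) := pd_pt (CD_pt hz) m n'
    _ = pd (m+1+1) n' z := pd_pt hz (m+1) n'
    _ = pt (pd (m+1) n' z) := pd_succ_t (m+1) n' z
  have e5 : pd m n' (px (px z)) = px (pd m (n'+1) z) := by
    calc pd m n' (px (px z)) = pd m (n'+1) (px z) := pd_px m n' (px z)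
    _ = pd m (n'+1+1) z := pd_px m (n'+1) z
    _ = px (pd m (n'+1) z) := pd_succ_x hz m (n'+1)
  have e4' := congrFun (congrFun e4 t) x
  have e5' := congrFun (congrFun e5 t) x
  linarith [hv, e1, e2, e3, e4', e5']

set_option maxHeartbeats 4000000 in
/-- the key formula exchanging a spatial derivative in the energy
for a time derivative plus lower-order energies. -/
theorem statement18 (C C' : ℝ) (m n : ℕ) (hC : 0 ≤ C) (hC' : 0 ≤ C') (hn : 1 ≤ n) :
    ∃ C'' : ℝ, 0 < C'' ∧
      ∀ (z G g : ℝ → ℝ → ℝ) (E : ℕ → ℕ → ℝ → ℝ),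
        ContDiff ℝ (⊤ : ℕ∞) (fun p : ℝ × ℝ => z p.1 p.2) →
        ContDiff ℝ (⊤ : ℕ∞) (fun p : ℝ × ℝ => G p.1 p.2) →
        ContDiff ℝ (⊤ : ℕ∞) (fun p : ℝ × ℝ => g p.1 p.2) →
        LocXCompact z →
        (∀ t x, 0 ≤ t → pt (pt z) t x - px (px z) t x + z t x * G t x = g t x) →
        (∀ i j : ℕ, i + j ≤ m + n → ∀ t x, 0 ≤ t →
          |pd i j G t x| ≤ C / Real.cosh (2 * x)) →
        (∀ t, 0 ≤ t → (∫ x : ℝ, (pd m (n - 1) g t x) ^ 2) ≤ C') →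
        (E = fun i j t => (1 / 2) * ∫ x : ℝ,
          ((pt (pd i j z) t x) ^ 2 + (px (pd i j z) t x) ^ 2
            + (pd i j z t x) ^ 2 * (1 / (Real.cosh (2 * x)) ^ 2))) →
        ∀ t, 0 ≤ t →
          Real.sqrt (E m n t)
            ≤ C'' * (Real.sqrt (E (m + 1) (n - 1) t)
              + (∑ p ∈ Finset.range (m + 1) ×ˢ Finset.range n,
                  Real.sqrt (E p.1 p.2 t))
              + Real.sqrt C') := by
  obtain ⟨n', rfl⟩ : ∃ n', n = n' + 1 := ⟨n - 1, by omega⟩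
  set Nc : ℝ := (((m+1) * (n'+1) : ℕ) : ℝ) with hNcdef
  set M : ℝ := 2^(m + n' + 1) with hMdef
  set K₀ : ℝ := 4 + 3 * Nc * (M * C)^2 with hK₀def
  have hNc0 : (0:ℝ) < Nc := by
    rw [hNcdef]; exact_mod_cast Nat.pos_of_ne_zero (by positivity)
  have hK₀4 : (4:ℝ) ≤ K₀ := by
    rw [hK₀def]; nlinarith [sq_nonneg (M * C)]
  have hK₀pos : (0:ℝ) < K₀ := by linarith
  refine ⟨Real.sqrt K₀, Real.sqrt_pos.mpr hK₀pos, ?_⟩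
  intro z G g E hz hG hg hzc hpde hGbd hg2 hE t ht
  simp only [Nat.add_sub_cancel] at hg2 ⊢
  have hzCD : CD z := hz
  have hGCD : CD G := hG
  have hgCD : CD g := hg
  set zG : ℝ → ℝ → ℝ := fun a b => z a b * G a b with hzGdef
  have hzGCD : CD zG := CD_mul hzCD hGCD
  have hzGlxc : LocXCompact zG := by
    intro T₁ T₂
    obtain ⟨K, hK, h0⟩ := hzc T₁ T₂
    exact ⟨K, hK, fun a b hab hb => by simp only [hzGdef, h0 a b hab hb, zero_mul]⟩
  set Gb : ℝ → ℝ := fun x => 1 / (Real.cosh (2*x))^2 with hGbdef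
  have hcoshpos : ∀ x : ℝ, 0 < Real.cosh (2*x) := fun x =>
    lt_of_lt_of_le one_pos (Real.one_le_cosh (2*x))
  have hGbcont : Continuous Gb := by
    rw [hGbdef]
    exact Continuous.div continuous_const
      ((Real.continuous_cosh.comp (continuous_const.mul continuous_id)).pow 2)
      (fun x => (pow_pos (hcoshpos x) 2).ne')
  have hGbnn : ∀ x, 0 ≤ Gb x := fun x => by
    rw [hGbdef]; positivity
  have hGble1 : ∀ x, Gb x ≤ 1 := fun x => by
    rw [hGbdef]
    rw [div_le_one (pow_pos (hcoshpos x) 2)]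
    nlinarith [Real.one_le_cosh (2*x)]
  -- integrability helpers at the fixed time t
  have hint : ∀ (u : ℝ → ℝ → ℝ), CD u → LocXCompact u →
      Integrable (fun x => (u t x)^2) := fun u hu hL =>
    ((cont_slice_x hu t).pow 2).integrable_of_hasCompactSupport
      (by exact (lxc_compactSupport hL t).comp_left (g := fun y : ℝ => y^2) (by simp))
  have hintw : ∀ (u : ℝ → ℝ → ℝ), CD u → LocXCompact u →
      Integrable (fun x => (u t x)^2 * Gb x) := by
    intro u hu hL
    have hcs1 : HasCompactSupport ((fun y : ℝ => y ^ 2) ∘ fun x => u t x) :=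
      (lxc_compactSupport hL t).comp_left (by simp)
    have hcs2 : HasCompactSupport (fun x => (u t x)^2 * Gb x) := hcs1.mul_right
    exact (((cont_slice_x hu t).pow 2).mul hGbcont).integrable_of_hasCompactSupport hcs2
  have i1 : ∀ i j, Integrable (fun x => (pt (pd i j z) t x)^2) := fun i j =>
    hint _ (CD_pt (CD_pd hzCD i j)) (lxc_pt (lxc_pd hzc i j))
  have i2 : ∀ i j, Integrable (fun x => (px (pd i j z) t x)^2) := fun i j =>
    hint _ (CD_px (CD_pd hzCD i j)) (lxc_px (lxc_pd hzc i j))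
  have i3 : ∀ i j, Integrable (fun x => (pd i j z t x)^2 * Gb x) := fun i j =>
    hintw _ (CD_pd hzCD i j) (lxc_pd hzc i j)
  have hEsplit : ∀ i j, E i j t
      = (1/2) * (∫ x, (pt (pd i j z) t x)^2) + (1/2) * (∫ x, (px (pd i j z) t x)^2)
        + (1/2) * (∫ x, (pd i j z t x)^2 * Gb x) := by
    intro i j
    have i12 : Integrable (fun x => (pt (pd i j z) t x)^2 + (px (pd i j z) t x)^2) :=
      (i1 i j).add (i2 i j)
    have h0 : E i j t = (1/2) * ∫ x, ((pt (pd i j z) t x)^2 + (px (pd i j z) t x)^2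
        + (pd i j z t x)^2 * Gb x) := by rw [hE]
    rw [h0, MeasureTheory.integral_add i12 (i3 i j),
        MeasureTheory.integral_add (i1 i j) (i2 i j)]
    ring
  have hEnn : ∀ i j, 0 ≤ E i j t := by
    intro i j
    rw [hE]
    have h0 : 0 ≤ ∫ x : ℝ, ((pt (pd i j z) t x) ^ 2 + (px (pd i j z) t x) ^ 2
        + (pd i j z t x) ^ 2 * (1 / (Real.cosh (2 * x)) ^ 2)) :=
      integral_nonneg (fun x => by positivity)
    linarith
  have n1 : ∀ i j, 0 ≤ ∫ x, (pt (pd i j z) t x)^2 := fun i j =>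
    integral_nonneg (fun x => sq_nonneg _)
  have n2 : ∀ i j, 0 ≤ ∫ x, (px (pd i j z) t x)^2 := fun i j =>
    integral_nonneg (fun x => sq_nonneg _)
  have n3 : ∀ i j, 0 ≤ ∫ x, (pd i j z t x)^2 * Gb x := fun i j =>
    integral_nonneg (fun x => mul_nonneg (sq_nonneg _) (hGbnn x))
  have hle1 : ∀ i j, (∫ x, (pt (pd i j z) t x)^2) ≤ 2 * E i j t := by
    intro i j; have h := hEsplit i j; have := n2 i j; have := n3 i j; linarith
  have hle2 : ∀ i j, (∫ x, (px (pd i j z) t x)^2) ≤ 2 * E i j t := by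
    intro i j; have h := hEsplit i j; have := n1 i j; have := n3 i j; linarith
  have hle3 : ∀ i j, (∫ x, (pd i j z t x)^2 * Gb x) ≤ 2 * E i j t := by
    intro i j; have h := hEsplit i j; have := n1 i j; have := n2 i j; linarith
  -- identities
  have hDz : pd m (n'+1) z = px (pd m n' z) := pd_succ_x hzCD m n'
  have hA : pt (pd m (n'+1) z) = px (pd (m+1) n' z) := by
    rw [← pd_succ_t m (n'+1) z]
    exact pd_succ_x hzCD (m+1) n'
  have keyB : ∀ x, px (pd m (n'+1) z) t x
      = pt (pd (m+1) n' z) t x + pd m n' zG t x - pd m n' g t x := fun x =>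
    pde_key hzCD hGCD hgCD hpde m n' t x ht
  -- bound the three pieces of E m (n'+1)
  have ha1 : (∫ x, (pt (pd m (n'+1) z) t x)^2) ≤ 2 * E (m+1) n' t := by
    rw [hA]; exact hle2 (m+1) n'
  have ha3 : (∫ x, (pd m (n'+1) z t x)^2 * Gb x) ≤ 2 * E m n' t := by
    have hmono : (∫ x, (pd m (n'+1) z t x)^2 * Gb x) ≤ ∫ x, (px (pd m n' z) t x)^2 := by
      apply integral_mono (i3 m (n'+1)) (i2 m n')
      intro x
      rw [hDz]
      calc (px (pd m n' z) t x)^2 * Gb x ≤ (px (pd m n' z) t x)^2 * 1 :=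
            mul_le_mul_of_nonneg_left (hGble1 x) (sq_nonneg _)
      _ = (px (pd m n' z) t x)^2 := mul_one _
    exact le_trans hmono (hle2 m n')
  -- the set of lower-order indices
  set S : Finset (ℕ × ℕ) := Finset.range (m+1) ×ˢ Finset.range (n'+1) with hSdef
  have hScard : (S.card : ℝ) = Nc := by
    rw [hSdef, hNcdef, Finset.card_product, Finset.card_range, Finset.card_range]
  -- Leibniz bound for the zG term
  have iQ : Integrable (fun x => (pd m n' zG t x)^2) :=
    hint _ (CD_pd hzGCD m n') (lxc_pd hzGlxc m n')
  have hQpt : ∀ x, (pd m n' zG t x)^2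
      ≤ ∑ p ∈ S, (Nc * (M*C)^2) * ((pd p.1 p.2 z t x)^2 * Gb x) := by
    intro x
    have hlei : pd m n' zG t x
        = ∑ p ∈ S, ((m.choose p.1 : ℝ) * (n'.choose p.2 : ℝ))
            * (pd p.1 p.2 z t x * pd (m - p.1) (n' - p.2) G t x) := by
      rw [hzGdef]
      exact pd_mul m n' hzCD hGCD t x
    have hsq : (pd m n' zG t x)^2
        ≤ (S.card : ℝ) * ∑ p ∈ S, (((m.choose p.1 : ℝ) * (n'.choose p.2 : ℝ))
            * (pd p.1 p.2 z t x * pd (m - p.1) (n' - p.2) G t x))^2 := by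
      rw [hlei]
      exact sq_sum_le_card_mul_sum_sq
    have hterm : ∀ p ∈ S, (((m.choose p.1 : ℝ) * (n'.choose p.2 : ℝ))
          * (pd p.1 p.2 z t x * pd (m - p.1) (n' - p.2) G t x))^2
        ≤ (M*C)^2 * ((pd p.1 p.2 z t x)^2 * Gb x) := by
      intro p _
      have hc0 : (0:ℝ) ≤ (m.choose p.1 : ℝ) * (n'.choose p.2 : ℝ) := by positivity
      have hcM : (m.choose p.1 : ℝ) * (n'.choose p.2 : ℝ) ≤ M := by
        rw [hMdef]
        have h1 : (m.choose p.1 : ℝ) ≤ 2^m := by exact_mod_cast choose_le_two_pow' m p.1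
        have h2 : (n'.choose p.2 : ℝ) ≤ 2^n' := by exact_mod_cast choose_le_two_pow' n' p.2
        calc (m.choose p.1 : ℝ) * (n'.choose p.2 : ℝ) ≤ 2^m * 2^n' := by
              apply mul_le_mul h1 h2 (by positivity) (by positivity)
        _ = 2^(m+n') := by rw [pow_add]
        _ ≤ 2^(m+n'+1) := by
              apply pow_le_pow_right₀ (by norm_num) (by omega)
      have hGder : |pd (m - p.1) (n' - p.2) G t x| ≤ C / Real.cosh (2*x) :=
        hGbd (m - p.1) (n' - p.2) (by omega) t x ht
      have hGsq : (pd (m - p.1) (n' - p.2) G t x)^2 ≤ C^2 * Gb x := by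
        have h1 : (pd (m - p.1) (n' - p.2) G t x)^2 ≤ (C / Real.cosh (2*x))^2 := by
          rw [← sq_abs]
          exact pow_le_pow_left₀ (abs_nonneg _) hGder 2
        have h2 : (C / Real.cosh (2*x))^2 = C^2 * Gb x := by
          rw [hGbdef, div_pow]
          field_simp
        linarith
      calc (((m.choose p.1 : ℝ) * (n'.choose p.2 : ℝ))
            * (pd p.1 p.2 z t x * pd (m - p.1) (n' - p.2) G t x))^2
          = ((m.choose p.1 : ℝ) * (n'.choose p.2 : ℝ))^2 * (pd p.1 p.2 z t x)^2
              * (pd (m - p.1) (n' - p.2) G t x)^2 := by ring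
      _ ≤ M^2 * (pd p.1 p.2 z t x)^2 * (C^2 * Gb x) := by
          apply mul_le_mul
          · exact mul_le_mul_of_nonneg_right (pow_le_pow_left₀ hc0 hcM 2) (sq_nonneg _)
          · exact hGsq
          · exact sq_nonneg _
          · positivity
      _ = (M*C)^2 * ((pd p.1 p.2 z t x)^2 * Gb x) := by ring
    calc (pd m n' zG t x)^2
        ≤ (S.card : ℝ) * ∑ p ∈ S, (((m.choose p.1 : ℝ) * (n'.choose p.2 : ℝ))
            * (pd p.1 p.2 z t x * pd (m - p.1) (n' - p.2) G t x))^2 := hsq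
    _ ≤ (S.card : ℝ) * ∑ p ∈ S, (M*C)^2 * ((pd p.1 p.2 z t x)^2 * Gb x) := by
        apply mul_le_mul_of_nonneg_left (Finset.sum_le_sum hterm) (by positivity)
    _ = ∑ p ∈ S, (Nc * (M*C)^2) * ((pd p.1 p.2 z t x)^2 * Gb x) := by
        rw [Finset.mul_sum, hScard]
        refine Finset.sum_congr rfl fun p _ => ?_
        ring
  have hQI : (∫ x, (pd m n' zG t x)^2)
      ≤ ∑ p ∈ S, (Nc * (M*C)^2) * (2 * E p.1 p.2 t) := by
    have hstep : (∫ x, (pd m n' zG t x)^2)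
        ≤ ∫ x, ∑ p ∈ S, (Nc * (M*C)^2) * ((pd p.1 p.2 z t x)^2 * Gb x) := by
      apply integral_mono iQ _ hQpt
      exact integrable_finset_sum S (fun p _ => ((i3 p.1 p.2).const_mul _))
    rw [MeasureTheory.integral_finset_sum S (fun p _ => ((i3 p.1 p.2).const_mul _))] at hstep
    refine le_trans hstep (Finset.sum_le_sum fun p _ => ?_)
    rw [MeasureTheory.integral_const_mul]
    exact mul_le_mul_of_nonneg_left (hle3 p.1 p.2) (by positivity)
  -- the B term via the PDE
  have ha2 : (∫ x, (px (pd m (n'+1) z) t x)^2)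
      ≤ 3 * (2 * E (m+1) n' t) + 3 * (∫ x, (pd m n' zG t x)^2) + 3 * C' := by
    have iP : Integrable (fun x => (pt (pd (m+1) n' z) t x)^2) := i1 (m+1) n'
    have hRfun : (fun x => pd m n' g t x)
        = fun x => pt (pd (m+1) n' z) t x + pd m n' zG t x + -(px (pd m (n'+1) z) t x) := by
      funext x
      have := keyB x
      linarith
    have hcsneg : HasCompactSupport (fun x => -(px (pd m (n'+1) z) t x)) :=
      (lxc_compactSupport (lxc_px (lxc_pd hzc m (n'+1))) t).comp_left
        (g := Neg.neg) neg_zero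
    have hRcs : HasCompactSupport (fun x => pd m n' g t x) := by
      rw [hRfun]
      exact ((lxc_compactSupport (lxc_pt (lxc_pd hzc (m+1) n')) t).add
        (lxc_compactSupport (lxc_pd hzGlxc m n') t)).add hcsneg
    have hRcont : Continuous (fun x => pd m n' g t x) := cont_slice_x (CD_pd hgCD m n') t
    have iR : Integrable (fun x => (pd m n' g t x)^2) :=
      (hRcont.pow 2).integrable_of_hasCompactSupport
        (by exact hRcs.comp_left (g := fun y : ℝ => y^2) (by simp))
    have hpw : ∀ x, (px (pd m (n'+1) z) t x)^2
        ≤ 3 * (pt (pd (m+1) n' z) t x)^2 + 3 * (pd m n' zG t x)^2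
          + 3 * (pd m n' g t x)^2 := by
      intro x
      have h := keyB x
      rw [h]
      nlinarith [sq_nonneg (pt (pd (m+1) n' z) t x - pd m n' zG t x),
        sq_nonneg (pt (pd (m+1) n' z) t x + pd m n' g t x),
        sq_nonneg (pd m n' zG t x + pd m n' g t x)]
    have i12' : Integrable (fun x => 3 * (pt (pd (m+1) n' z) t x)^2
        + 3 * (pd m n' zG t x)^2) := (iP.const_mul 3).add (iQ.const_mul 3)
    have hmono : (∫ x, (px (pd m (n'+1) z) t x)^2)
        ≤ ∫ x, (3 * (pt (pd (m+1) n' z) t x)^2 + 3 * (pd m n' zG t x)^2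
            + 3 * (pd m n' g t x)^2) := by
      apply integral_mono (i2 m (n'+1)) _ hpw
      exact i12'.add (iR.const_mul 3)
    rw [MeasureTheory.integral_add i12' (iR.const_mul 3),
        MeasureTheory.integral_add (iP.const_mul 3) (iQ.const_mul 3),
        MeasureTheory.integral_const_mul, MeasureTheory.integral_const_mul,
        MeasureTheory.integral_const_mul] at hmono
    have hP : (∫ x, (pt (pd (m+1) n' z) t x)^2) ≤ 2 * E (m+1) n' t := hle1 (m+1) n'
    have hR : (∫ x, (pd m n' g t x)^2) ≤ C' := hg2 t ht
    linarith
  -- assemble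
  set b : ℝ := E (m+1) n' t with hbdef
  set s : ℝ := ∑ p ∈ S, E p.1 p.2 t with hsdef
  have hbnn : 0 ≤ b := hEnn (m+1) n'
  have hsnn : 0 ≤ s := Finset.sum_nonneg fun p _ => hEnn p.1 p.2
  have hmn'_mem : (m, n') ∈ S := by
    rw [hSdef]
    simp [Finset.mem_product]
  have hEmn' : E m n' t ≤ s := by
    rw [hsdef]
    exact Finset.single_le_sum (fun p _ => hEnn p.1 p.2) hmn'_mem
  have hQI' : (∫ x, (pd m n' zG t x)^2) ≤ 2 * Nc * (M*C)^2 * s := by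
    have h1 : ∑ p ∈ S, (Nc * (M*C)^2) * (2 * E p.1 p.2 t) = 2 * Nc * (M*C)^2 * s := by
      rw [hsdef, Finset.mul_sum]
      refine Finset.sum_congr rfl fun p _ => ?_
      ring
    linarith [hQI, h1.le]
  have hmain : E m (n'+1) t ≤ K₀ * (b + s + C') := by
    have hsplit := hEsplit m (n'+1)
    have hNcnn : (0:ℝ) ≤ Nc * (M*C)^2 := by positivity
    have p1 : 0 ≤ Nc * (M*C)^2 * b := mul_nonneg hNcnn hbnn
    have p2 : 0 ≤ Nc * (M*C)^2 * s := mul_nonneg hNcnn hsnn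
    have p3 : 0 ≤ Nc * (M*C)^2 * C' := mul_nonneg hNcnn hC'
    rw [hK₀def]
    linarith [hsplit, ha1, ha2, ha3, hQI', hEmn', p1, p2, p3]
  -- square roots
  have hfin : Real.sqrt (E m (n'+1) t)
      ≤ Real.sqrt K₀ * (Real.sqrt b + (∑ p ∈ S, Real.sqrt (E p.1 p.2 t)) + Real.sqrt C') := by
    have h1 : Real.sqrt (E m (n'+1) t) ≤ Real.sqrt (K₀ * (b + s + C')) :=
      Real.sqrt_le_sqrt hmain
    rw [Real.sqrt_mul hK₀pos.le] at h1
    have h2 : Real.sqrt (b + s + C') ≤ Real.sqrt b + Real.sqrt s + Real.sqrt C' := by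
      have ha := sqrt_add_le' (add_nonneg hbnn hsnn) hC'
      have hb2 := sqrt_add_le' hbnn hsnn
      linarith
    have h3 : Real.sqrt s ≤ ∑ p ∈ S, Real.sqrt (E p.1 p.2 t) := by
      rw [hsdef]
      exact sqrt_sum_le S _ (fun p _ => hEnn p.1 p.2)
    calc Real.sqrt (E m (n'+1) t) ≤ Real.sqrt K₀ * Real.sqrt (b + s + C') := h1
    _ ≤ Real.sqrt K₀ * (Real.sqrt b + (∑ p ∈ S, Real.sqrt (E p.1 p.2 t)) + Real.sqrt C') := by
        apply mul_le_mul_of_nonneg_left _ (Real.sqrt_nonneg _)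
        linarith
  exact hfin
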